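/- The identity (μ;q)_a/(q;q)_a = Σ_{i+j=a} ν^j (λ;q)_j (ν;q)_i / ((q;q)_j (q;q)_i) holds for all a ≥ 0, where ν = μ/λ. -/

import Mathlib

open scoped BigOperators

noncomputable section

/-- The q-Pochhammer symbol `(z;q)_m = ∏_{j=0}^{m-1} (1 - z q^j)`. -/
def qP (q z : ℝ) (m : ℕ) : ℝ := ∏ j ∈ Finset.range m, (1 - z * q ^ j)

/-- The q-binomial coefficient, zero outside `0 ≤ k ≤ m`. -/
def qBinom (q : ℝ) (m k : ℕ) : ℝ :=
  if k ≤ m then qP q q m / (qP q q k * qP q q (m - k)) else 0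

/-!
Both sides, as functions `f` of `a`, satisfy `f 0 = 1` and the recurrence
`(1 - q^(a+1)) f (a+1) = (1 - λν q^a) f a`, which determines them since `q` is not a root of
unity. For the convolution on the right this comes from splitting
`1 - q^(a+1) = (1 - q^(a+1-j)) + q^(a+1-j) (1 - q^j)` in the `j`-th term and lowering the index
of the `ν`-ratio in the first part and of the `λ`-ratio in the second.
-/

open Finset

section

variable {q : ℝ}

lemma qP_succ (z : ℝ) (m : ℕ) : qP q z (m + 1) = qP q z m * (1 - z * q ^ m) :=
  prod_range_succ _ _

lemma qP_self_ne_zero (hq : ∀ n : ℕ, q ^ (n + 1) ≠ 1) (m : ℕ) : qP q q m ≠ 0 :=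
  prod_ne_zero_iff.mpr fun j _ => by
    rw [← pow_succ']
    exact sub_ne_zero.mpr (hq j).symm

/-- `(z;q)_n / (q;q)_n`, the coefficient of `t^n` in `(zt;q)_∞ / (t;q)_∞`. -/
def qPochRatio (q z : ℝ) (n : ℕ) : ℝ := qP q z n / qP q q n

lemma one_sub_pow_mul_qPochRatio_succ (hq : ∀ n : ℕ, q ^ (n + 1) ≠ 1) (z : ℝ) (n : ℕ) :
    (1 - q ^ (n + 1)) * qPochRatio q z (n + 1) = (1 - z * q ^ n) * qPochRatio q z n := by
  have hn := qP_self_ne_zero hq n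
  have hn' : 1 - q ^ (n + 1) ≠ 0 := sub_ne_zero.mpr (hq n).symm
  rw [qPochRatio, qPochRatio, qP_succ, qP_succ, ← pow_succ']
  field_simp

lemma one_sub_pow_mul_sum_qPochRatio_succ (hq : ∀ n : ℕ, q ^ (n + 1) ≠ 1)
    (lam nu : ℝ) (a : ℕ) :
    (1 - q ^ (a + 1)) *
        ∑ j ∈ range (a + 2), nu ^ j * qPochRatio q lam j * qPochRatio q nu (a + 1 - j)
      = (1 - lam * nu * q ^ a) *
        ∑ j ∈ range (a + 1), nu ^ j * qPochRatio q lam j * qPochRatio q nu (a - j) := by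
  set T : ℕ → ℕ → ℝ := fun n j => nu ^ j * qPochRatio q lam j * qPochRatio q nu (n - j)
  have hsplit : ∀ j ∈ range (a + 2), (1 - q ^ (a + 1)) * T (a + 1) j
      = (1 - q ^ (a + 1 - j)) * T (a + 1) j + q ^ (a + 1 - j) * (1 - q ^ j) * T (a + 1) j := by
    intro j hj
    have : q ^ (a + 1 - j) * q ^ j = q ^ (a + 1) := by
      rw [← pow_add, Nat.sub_add_cancel (by simpa [Nat.lt_succ_iff] using hj)]
    linear_combination T (a + 1) j * this
  have hfirst : ∑ j ∈ range (a + 2), (1 - q ^ (a + 1 - j)) * T (a + 1) j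
      = ∑ j ∈ range (a + 1), (1 - nu * q ^ (a - j)) * T a j := by
    rw [sum_range_succ, Nat.sub_self, pow_zero, sub_self, zero_mul, add_zero]
    refine sum_congr rfl fun j hj => ?_
    have hj : a + 1 - j = a - j + 1 := by have := mem_range.mp hj; omega
    simp only [T, hj]
    linear_combination nu ^ j * qPochRatio q lam j * one_sub_pow_mul_qPochRatio_succ hq nu (a - j)
  have hsecond : ∑ j ∈ range (a + 2), q ^ (a + 1 - j) * (1 - q ^ j) * T (a + 1) j
      = ∑ j ∈ range (a + 1), nu * q ^ (a - j) * (1 - lam * q ^ j) * T a j := by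
    rw [sum_range_succ', pow_zero, sub_self, mul_zero, zero_mul, add_zero]
    refine sum_congr rfl fun j _ => ?_
    simp only [T, Nat.add_sub_add_right]
    linear_combination q ^ (a - j) * nu ^ (j + 1) * qPochRatio q nu (a - j) *
      one_sub_pow_mul_qPochRatio_succ hq lam j
  rw [mul_sum, mul_sum, sum_congr rfl hsplit, sum_add_distrib, hfirst, hsecond,
    ← sum_add_distrib]
  refine sum_congr rfl fun j hj => ?_
  have : q ^ (a - j) * q ^ j = q ^ a := by
    rw [← pow_add, Nat.sub_add_cancel (by simpa [Nat.lt_succ_iff] using hj)]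
  linear_combination -(lam * nu * T a j * this)

theorem qPochRatio_mul_eq_sum (hq : ∀ n : ℕ, q ^ (n + 1) ≠ 1) (lam nu : ℝ) (a : ℕ) :
    qPochRatio q (lam * nu) a
      = ∑ j ∈ range (a + 1), nu ^ j * qPochRatio q lam j * qPochRatio q nu (a - j) := by
  induction a with
  | zero => simp [qPochRatio, qP]
  | succ a ih =>
    refine mul_left_cancel₀ (sub_ne_zero.mpr (hq a).symm) ?_
    rw [one_sub_pow_mul_qPochRatio_succ hq, one_sub_pow_mul_sum_qPochRatio_succ hq, ih]

end

/-- With `ν = μ/λ`: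
`(μ;q)_a/(q;q)_a = ∑_{i+j=a} ν^j (λ;q)_j (ν;q)_i / ((q;q)_j (q;q)_i)`. -/
theorem coefficient_identity (q lam mu : ℝ) (hq0 : 0 < q) (hq1 : q < 1)
    (hlam : lam ≠ 0) (a : ℕ) :
    qP q mu a / qP q q a
      = ∑ j ∈ Finset.range (a + 1),
          (mu / lam) ^ j * qP q lam j * qP q (mu / lam) (a - j) /
            (qP q q j * qP q q (a - j)) := by
  have hq : ∀ n : ℕ, q ^ (n + 1) ≠ 1 := fun n => (pow_lt_one₀ hq0.le hq1 n.succ_ne_zero).ne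
  have key := qPochRatio_mul_eq_sum hq lam (mu / lam) a
  rw [mul_div_cancel₀ mu hlam] at key
  simp only [qPochRatio] at key
  rw [key]
  refine sum_congr rfl fun j _ => ?_
  ring
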